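/- arXiv:2110.04609 — 3 statements merged into one kernel-verified Lean document; each statement's English description precedes it below -/
import Mathlib

section
/- Let P_U^N be the projection of H_W onto the span of {a^{n/2}cos(bⁿπ·), a^{n/2}sin(bⁿπ·) : 0 ≤ n ≤ N−1}. Then ‖I_W P_U^N‖² = (1 − a^N)/(1 − a), where I_W : H_W → C([−1,1]) is the embedding with sup norm. -/
open Real

/-- `‖I_W P_U^N‖² = (1 − a^N)/(1 − a)` where `P_U^N` projects `H_W`
onto the span of the first `N` cosine/sine basis functions. -/
theorem head_projection_norm_sq (a : ℝ) (b : ℕ) (ha0 : 0 < a) (ha1 : a < 1)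
    (hb : 2 ≤ b) (N : ℕ) (hN : 1 ≤ N) :
    IsLUB {t : ℝ | ∃ c d : ℕ → ℝ,
        Summable (fun n => (c n) ^ 2 + (d n) ^ 2) ∧
        (∑' n : ℕ, ((c n) ^ 2 + (d n) ^ 2)) ≤ 1 ∧
        ∃ x ∈ Set.Icc (-1 : ℝ) 1,
          t = (∑ n ∈ Finset.range N, Real.sqrt a ^ n *
                (c n * Real.cos ((b : ℝ) ^ n * Real.pi * x)
                  + d n * Real.sin ((b : ℝ) ^ n * Real.pi * x))) ^ 2}
      ((1 - a ^ N) / (1 - a)) := by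
  have h1a : (0:ℝ) < 1 - a := by linarith
  have hSsum : ∑ n ∈ Finset.range N, a ^ n = (1 - a ^ N) / (1 - a) := by
    rw [eq_div_iff h1a.ne']
    linear_combination -(geom_sum_mul a N)
  have hSpos : 0 < (1 - a ^ N) / (1 - a) := by
    rw [← hSsum]
    exact Finset.sum_pos (fun n _ => pow_pos ha0 n)
      (Finset.nonempty_range_iff.mpr (by omega))
  have hsqa : ∀ n : ℕ, (Real.sqrt a ^ n) ^ 2 = a ^ n := by
    intro n
    rw [← pow_mul, mul_comm n 2, pow_mul, Real.sq_sqrt ha0.le]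
  constructor
  · -- upper bound
    rintro t ⟨c, d, hsum, htsum, x, _, rfl⟩
    calc (∑ n ∈ Finset.range N, Real.sqrt a ^ n *
            (c n * Real.cos ((b : ℝ) ^ n * Real.pi * x)
              + d n * Real.sin ((b : ℝ) ^ n * Real.pi * x))) ^ 2
        ≤ (∑ n ∈ Finset.range N, (Real.sqrt a ^ n) ^ 2) *
          (∑ n ∈ Finset.range N, (c n * Real.cos ((b : ℝ) ^ n * Real.pi * x)
              + d n * Real.sin ((b : ℝ) ^ n * Real.pi * x)) ^ 2) :=
          Finset.sum_mul_sq_le_sq_mul_sq _ _ _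
      _ ≤ ((1 - a ^ N) / (1 - a)) * 1 := by
          apply mul_le_mul
          · simp only [hsqa]; exact hSsum.le
          · calc (∑ n ∈ Finset.range N,
                  (c n * Real.cos ((b : ℝ) ^ n * Real.pi * x)
                    + d n * Real.sin ((b : ℝ) ^ n * Real.pi * x)) ^ 2)
                ≤ ∑ n ∈ Finset.range N, ((c n) ^ 2 + (d n) ^ 2) := by
                  apply Finset.sum_le_sum
                  intro n _
                  have hpyth := Real.sin_sq_add_cos_sq ((b : ℝ) ^ n * Real.pi * x)
                  nlinarith [sq_nonneg (c n * Real.sin ((b : ℝ) ^ n * Real.pi * x)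
                    - d n * Real.cos ((b : ℝ) ^ n * Real.pi * x))]
              _ ≤ ∑' n : ℕ, ((c n) ^ 2 + (d n) ^ 2) := by
                  exact Summable.sum_le_tsum _ (fun n _ => by positivity) hsum
              _ ≤ 1 := htsum
          · positivity
          · exact hSpos.le
      _ = (1 - a ^ N) / (1 - a) := mul_one _
  · -- least upper bound: the value is attained
    intro u hu
    set S := (1 - a ^ N) / (1 - a) with hS
    apply hu
    refine ⟨fun n => if n < N then Real.sqrt a ^ n / Real.sqrt S else 0,
      fun _ => 0, ?_, ?_, 0, by norm_num, ?_⟩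
    · apply summable_of_ne_finset_zero (s := Finset.range N)
      intro n hn
      simp [Finset.mem_range.not.mp hn]
    · rw [tsum_eq_sum (s := Finset.range N)
        (fun n hn => by simp [Finset.mem_range.not.mp hn])]
      have : ∀ n ∈ Finset.range N,
          ((if n < N then Real.sqrt a ^ n / Real.sqrt S else 0) ^ 2 + (0:ℝ) ^ 2)
            = a ^ n / S := by
        intro n hn
        rw [Finset.mem_range] at hn
        simp only [if_pos hn]
        rw [div_pow, hsqa, Real.sq_sqrt hSpos.le]
        ring
      rw [Finset.sum_congr rfl this, ← Finset.sum_div, hSsum, div_self hSpos.ne']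
    · have : ∀ n ∈ Finset.range N,
          Real.sqrt a ^ n *
            ((if n < N then Real.sqrt a ^ n / Real.sqrt S else 0) *
              Real.cos ((b : ℝ) ^ n * Real.pi * 0)
              + 0 * Real.sin ((b : ℝ) ^ n * Real.pi * 0))
            = a ^ n / Real.sqrt S := by
        intro n hn
        rw [Finset.mem_range] at hn
        simp only [if_pos hn, mul_zero, Real.cos_zero, Real.sin_zero, zero_mul,
          add_zero, mul_one]
        rw [← hsqa n]
        ring
      rw [Finset.sum_congr rfl this, ← Finset.sum_div, hSsum, div_pow,
        Real.sq_sqrt hSpos.le, sq, mul_div_assoc, div_self hSpos.ne', mul_one]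
end

section
/- Let P_V^N be the projection of H_W onto the closed span of {a^{n/2}cos(bⁿπ·), a^{n/2}sin(bⁿπ·) : n ≥ N}. Then ‖I_W P_V^N‖² = a^N/(1 − a). -/
open Real

private lemma summable_ite_geom {a : ℝ} (ha0 : 0 ≤ a) (ha1 : a < 1) (N : ℕ) :
    Summable (fun n : ℕ => if n < N then (0:ℝ) else a ^ n) := by
  refine Summable.of_nonneg_of_le (fun n => ?_) (fun n => ?_)
    (summable_geometric_of_lt_one ha0 ha1)
  · split <;> positivity
  · split
    · positivity
    · exact le_rfl

private lemma tsum_tail_geom {a : ℝ} (ha0 : 0 ≤ a) (ha1 : a < 1) (N : ℕ) :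
    (∑' n : ℕ, if n < N then (0:ℝ) else a ^ n) = a ^ N / (1 - a) := by
  have hs := summable_ite_geom ha0 ha1 N
  have h := Summable.sum_add_tsum_nat_add (f := fun n : ℕ => if n < N then (0:ℝ) else a ^ n) N hs
  have h1 : (∑ i ∈ Finset.range N, if i < N then (0:ℝ) else a ^ i) = 0 := by
    apply Finset.sum_eq_zero
    intro i hi
    simp [Finset.mem_range.mp hi]
  have h2 : (∑' i : ℕ, if i + N < N then (0:ℝ) else a ^ (i + N))
      = ∑' i : ℕ, a ^ N * a ^ i := by
    congr 1; funext i
    rw [if_neg (by omega), pow_add, mul_comm]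
  rw [h1, h2, tsum_mul_left, tsum_geometric_of_lt_one ha0 ha1] at h
  rw [← h]
  ring

/-- Cauchy–Schwarz for tsums of nonnegative sequences. -/
private lemma tsum_cs {u v : ℕ → ℝ} (hu : ∀ n, 0 ≤ u n) (hv : ∀ n, 0 ≤ v n)
    (hus : Summable (fun n => u n ^ 2)) (hvs : Summable (fun n => v n ^ 2)) :
    Summable (fun n => u n * v n) ∧
      (∑' n, u n * v n) ^ 2 ≤ (∑' n, u n ^ 2) * (∑' n, v n ^ 2) := by
  have hsum : Summable (fun n => u n * v n) := by
    refine Summable.of_nonneg_of_le (fun n => mul_nonneg (hu n) (hv n))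
      (fun n => ?_) ((hus.add hvs).div_const 2)
    nlinarith [sq_nonneg (u n - v n)]
  refine ⟨hsum, ?_⟩
  have hTu : 0 ≤ ∑' n, u n ^ 2 := tsum_nonneg fun n => sq_nonneg _
  have hTv : 0 ≤ ∑' n, v n ^ 2 := tsum_nonneg fun n => sq_nonneg _
  have hle : ∑' n, u n * v n ≤ Real.sqrt ((∑' n, u n ^ 2) * (∑' n, v n ^ 2)) := by
    refine Summable.tsum_le_of_sum_le hsum (fun s => ?_)
    have h1 : (∑ i ∈ s, u i * v i) ^ 2 ≤ (∑ i ∈ s, u i ^ 2) * (∑ i ∈ s, v i ^ 2) :=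
      Finset.sum_mul_sq_le_sq_mul_sq s u v
    have h2 : (∑ i ∈ s, u i ^ 2) ≤ ∑' n, u n ^ 2 :=
      Summable.sum_le_tsum s (fun i _ => sq_nonneg _) hus
    have h3 : (∑ i ∈ s, v i ^ 2) ≤ ∑' n, v n ^ 2 :=
      Summable.sum_le_tsum s (fun i _ => sq_nonneg _) hvs
    have h4 : (∑ i ∈ s, u i * v i) ^ 2 ≤ (∑' n, u n ^ 2) * (∑' n, v n ^ 2) := by
      calc (∑ i ∈ s, u i * v i) ^ 2 ≤ (∑ i ∈ s, u i ^ 2) * (∑ i ∈ s, v i ^ 2) := h1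
        _ ≤ (∑' n, u n ^ 2) * (∑' n, v n ^ 2) := by
            apply mul_le_mul h2 h3 (Finset.sum_nonneg fun i _ => sq_nonneg _) hTu
    exact (Real.le_sqrt (Finset.sum_nonneg fun i _ => mul_nonneg (hu i) (hv i))
      (mul_nonneg hTu hTv)).mpr h4
  have hnn : 0 ≤ ∑' n, u n * v n := tsum_nonneg fun n => mul_nonneg (hu n) (hv n)
  calc (∑' n, u n * v n) ^ 2 ≤ Real.sqrt ((∑' n, u n ^ 2) * (∑' n, v n ^ 2)) ^ 2 := by
        apply pow_le_pow_left₀ hnn hle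
    _ = (∑' n, u n ^ 2) * (∑' n, v n ^ 2) := Real.sq_sqrt (mul_nonneg hTu hTv)

/-- `‖I_W P_V^N‖² = a^N/(1 − a)` where `P_V^N` projects `H_W` onto the
closed span of the basis functions of index `n ≥ N`. -/
theorem tail_projection_norm_sq (a : ℝ) (b : ℕ) (ha0 : 0 < a) (ha1 : a < 1)
    (hb : 2 ≤ b) (N : ℕ) (hN : 1 ≤ N) :
    IsLUB {t : ℝ | ∃ c d : ℕ → ℝ,
        Summable (fun n => (c n) ^ 2 + (d n) ^ 2) ∧
        (∑' n : ℕ, ((c n) ^ 2 + (d n) ^ 2)) ≤ 1 ∧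
        (∀ n < N, c n = 0 ∧ d n = 0) ∧
        ∃ x ∈ Set.Icc (-1 : ℝ) 1,
          t = (∑' n : ℕ, Real.sqrt a ^ n *
                (c n * Real.cos ((b : ℝ) ^ n * Real.pi * x)
                  + d n * Real.sin ((b : ℝ) ^ n * Real.pi * x))) ^ 2}
      (a ^ N / (1 - a)) := by
  have hs0 : 0 ≤ Real.sqrt a := Real.sqrt_nonneg a
  have hssq : Real.sqrt a ^ 2 = a := Real.sq_sqrt ha0.le
  have hsn : ∀ n : ℕ, (Real.sqrt a ^ n) ^ 2 = a ^ n := by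
    intro n; rw [← pow_mul, mul_comm, pow_mul, hssq]
  have ha1' : (0:ℝ) < 1 - a := by linarith
  have haN : (0:ℝ) < a ^ N := pow_pos ha0 N
  apply IsGreatest.isLUB
  constructor
  · -- the value is attained
    set K := (1 - a) / a ^ N with hK
    have hK0 : 0 ≤ K := by positivity
    refine ⟨fun n => if n < N then 0 else Real.sqrt K * Real.sqrt a ^ n, fun _ => 0,
      ?_, ?_, ?_, 0, by norm_num, ?_⟩
    · -- summability
      have hc2 : ∀ n : ℕ, ((if n < N then (0:ℝ) else Real.sqrt K * Real.sqrt a ^ n)) ^ 2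
          + ((0:ℝ)) ^ 2 = K * (if n < N then (0:ℝ) else a ^ n) := by
        intro n; split
        · simp
        · rw [mul_pow, Real.sq_sqrt hK0, hsn]; ring
      simp only [hc2]
      exact (summable_ite_geom ha0.le ha1 N).mul_left K
    · have hc2 : ∀ n : ℕ, ((if n < N then (0:ℝ) else Real.sqrt K * Real.sqrt a ^ n)) ^ 2
          + ((0:ℝ)) ^ 2 = K * (if n < N then (0:ℝ) else a ^ n) := by
        intro n; split
        · simp
        · rw [mul_pow, Real.sq_sqrt hK0, hsn]; ring
      simp only [hc2]
      rw [tsum_mul_left, tsum_tail_geom ha0.le ha1 N, hK]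
      rw [div_mul_div_comm]
      rw [div_le_one (by positivity)]
      ring_nf
      exact le_rfl
    · intro n hn; exact ⟨if_pos hn, rfl⟩
    · have hterm : ∀ n : ℕ, Real.sqrt a ^ n *
          ((if n < N then (0:ℝ) else Real.sqrt K * Real.sqrt a ^ n) *
            Real.cos ((b : ℝ) ^ n * Real.pi * 0)
            + (0:ℝ) * Real.sin ((b : ℝ) ^ n * Real.pi * 0))
          = Real.sqrt K * (if n < N then (0:ℝ) else a ^ n) := by
        intro n
        rw [mul_zero, Real.cos_zero, Real.sin_zero]
        split
        · ring
        · linear_combination Real.sqrt K * hsn n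
      simp only [hterm]
      rw [tsum_mul_left, tsum_tail_geom ha0.le ha1 N]
      rw [mul_pow, Real.sq_sqrt hK0, hK]
      field_simp
  · -- upper bound
    rintro t ⟨c, d, hsum, htsum, hvanish, x, hx, ht⟩
    set F : ℕ → ℝ := fun n => Real.sqrt a ^ n *
        (c n * Real.cos ((b : ℝ) ^ n * Real.pi * x)
          + d n * Real.sin ((b : ℝ) ^ n * Real.pi * x)) with hF_def
    set u : ℕ → ℝ := fun n => if n < N then 0 else Real.sqrt a ^ n with hu_def
    set v : ℕ → ℝ := fun n => Real.sqrt (c n ^ 2 + d n ^ 2) with hv_def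
    have hu : ∀ n, 0 ≤ u n := by intro n; simp only [hu_def]; split <;> positivity
    have hv : ∀ n, 0 ≤ v n := fun n => Real.sqrt_nonneg _
    have hu2 : ∀ n, u n ^ 2 = (if n < N then (0:ℝ) else a ^ n) := by
      intro n; simp only [hu_def]; split
      · simp
      · exact hsn n
    have hus : Summable (fun n => u n ^ 2) := by
      simp only [hu2]; exact summable_ite_geom ha0.le ha1 N
    have hTu : (∑' n, u n ^ 2) = a ^ N / (1 - a) := by
      simp only [hu2]; exact tsum_tail_geom ha0.le ha1 N
    have hv2 : ∀ n, v n ^ 2 = c n ^ 2 + d n ^ 2 := by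
      intro n; exact Real.sq_sqrt (by positivity)
    have hvs : Summable (fun n => v n ^ 2) := by simp only [hv2]; exact hsum
    have hTv : (∑' n, v n ^ 2) ≤ 1 := by simp only [hv2]; exact htsum
    obtain ⟨hsum_uv, hcs⟩ := tsum_cs hu hv hus hvs
    have hterm : ∀ n : ℕ, |F n| ≤ u n * v n := by
      intro n
      simp only [hF_def]
      by_cases h : n < N
      · obtain ⟨hc, hd⟩ := hvanish n h
        simp [hc, hd, hu_def, h]
      · set θ := (b : ℝ) ^ n * Real.pi * x
        have h1 : (c n * Real.cos θ + d n * Real.sin θ) ^ 2 ≤ c n ^ 2 + d n ^ 2 := by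
          nlinarith [Real.sin_sq_add_cos_sq θ, sq_nonneg (c n * Real.sin θ - d n * Real.cos θ)]
        have h2 : |c n * Real.cos θ + d n * Real.sin θ| ≤ v n := by
          rw [← Real.sqrt_sq_eq_abs]
          exact Real.sqrt_le_sqrt h1
        rw [abs_mul, abs_pow, abs_of_nonneg hs0]
        have hun : u n = Real.sqrt a ^ n := if_neg h
        rw [hun]
        exact mul_le_mul_of_nonneg_left h2 (pow_nonneg hs0 n)
    have habs : Summable (fun n => |F n|) :=
      Summable.of_nonneg_of_le (fun n => abs_nonneg _) hterm hsum_uv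
    have h5 : |∑' n, F n| ≤ ∑' n, u n * v n := by
      calc |∑' n, F n| = ‖∑' n, F n‖ := (Real.norm_eq_abs _).symm
        _ ≤ ∑' n, ‖F n‖ := norm_tsum_le_tsum_norm (by simpa [Real.norm_eq_abs] using habs)
        _ = ∑' n, |F n| := by simp [Real.norm_eq_abs]
        _ ≤ ∑' n, u n * v n := Summable.tsum_le_tsum hterm habs hsum_uv
    rw [ht, ← sq_abs]
    calc |∑' n, F n| ^ 2
        ≤ (∑' n, u n * v n) ^ 2 := pow_le_pow_left₀ (abs_nonneg _) h5 2
      _ ≤ (∑' n, u n ^ 2) * (∑' n, v n ^ 2) := hcs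
      _ ≤ (a ^ N / (1 - a)) * 1 := by
          rw [hTu]
          exact mul_le_mul_of_nonneg_left hTv (by positivity)
      _ = a ^ N / (1 - a) := mul_one _
end

section
/- Let X and Y be n-dimensional real inner product spaces and T : X → Y a linear operator. For every ε > 0, C(ε, T) ≥ |det √(T*T)| · (1/ε)ⁿ. -/
/-!
The Euclidean volume in `Y` of `T(B_X)` is `√det(T*T)` (Mathlib's `LinearMap.normDet T`) times the
volume of the unit ball, whereas `N` balls of radius `ε` have total volume at most `N εⁿ` times the
volume of the unit ball. Unit balls of inner product spaces of the same dimension have the same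
volume, so `√det(T*T) ≤ N εⁿ` for every covering.
-/

open Metric ENNReal

/-- Covering number of an operator `T`: the minimal number of `ε`-balls in `Y`
needed to cover the image of the closed unit ball of `X`. -/
noncomputable def coveringNumber {X Y : Type*} [NormedAddCommGroup X] [NormedSpace ℝ X]
    [NormedAddCommGroup Y] [NormedSpace ℝ Y] (ε : ℝ) (T : X →L[ℝ] Y) : ℕ∞ :=
  sInf {n : ℕ∞ | ∃ t : Finset Y, (t.card : ℕ∞) = n ∧
    T '' Metric.closedBall 0 1 ⊆ ⋃ y ∈ t, Metric.ball y ε}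

open MeasureTheory Module

theorem le_coveringNumber {X Y : Type*} [NormedAddCommGroup X] [NormedSpace ℝ X]
    [NormedAddCommGroup Y] [NormedSpace ℝ Y] {ε : ℝ} {T : X →L[ℝ] Y} {c : ℝ≥0∞}
    (h : ∀ t : Finset Y, T '' closedBall 0 1 ⊆ ⋃ y ∈ t, ball y ε → c ≤ t.card) :
    c ≤ (coveringNumber ε T : ℝ≥0∞) := by
  simp only [_root_.coveringNumber, sInf_eq_iInf, ENat.toENNReal_iInf]
  exact le_iInf₂ fun _ ⟨t, hcard, hcover⟩ => hcard ▸ h t hcover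

theorem measure_le_card_mul_of_subset_biUnion_ball {E : Type*} [NormedAddCommGroup E]
    [NormedSpace ℝ E] [MeasurableSpace E] [BorelSpace E] [FiniteDimensional ℝ E]
    (μ : Measure E) [μ.IsAddHaarMeasure] {s : Set E} {t : Finset E} {ε : ℝ} (hε : 0 ≤ ε)
    (hs : s ⊆ ⋃ y ∈ t, ball y ε) :
    μ s ≤ t.card * (ENNReal.ofReal (ε ^ finrank ℝ E) * μ (closedBall 0 1)) :=
  calc μ s ≤ ∑ y ∈ t, μ (ball y ε) := (measure_mono hs).trans (measure_biUnion_finset_le t _)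
    _ ≤ ∑ y ∈ t, μ (closedBall y ε) := by gcongr; exact ball_subset_closedBall
    _ = t.card * (ENNReal.ofReal (ε ^ finrank ℝ E) * μ (closedBall 0 1)) := by
      simp only [μ.addHaar_closedBall' _ hε, Finset.sum_const, nsmul_eq_mul]

section InnerProductSpace

variable {X Y : Type*} [NormedAddCommGroup X] [InnerProductSpace ℝ X] [FiniteDimensional ℝ X]
  [NormedAddCommGroup Y] [InnerProductSpace ℝ Y] [FiniteDimensional ℝ Y]

theorem sqrt_det_adjoint_comp_self (T : X →L[ℝ] Y) :
    √(LinearMap.det ((ContinuousLinearMap.adjoint T ∘L T : X →L[ℝ] X) : X →ₗ[ℝ] X)) =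
      (T : X →ₗ[ℝ] Y).normDet := by
  change √(ContinuousLinearMap.det _) = _
  rw [← T.normDet_sq]
  exact Real.sqrt_sq (LinearMap.normDet_nonneg _)

variable [MeasurableSpace X] [BorelSpace X] [MeasurableSpace Y] [BorelSpace Y]

theorem volume_image_eq_normDet_mul (h : finrank ℝ X = finrank ℝ Y) (T : X →ₗ[ℝ] Y)
    (s : Set X) : volume (T '' s) = ENNReal.ofReal T.normDet * volume s := by
  rw [← InnerProductSpace.euclideanHausdorffMeasure_eq_volume (V := Y), ← h]
  exact T.euclideanHausdorffMeasure_image_eq_normDet_mul_volume s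

theorem volume_closedBall_eq_of_finrank_eq (h : finrank ℝ X = finrank ℝ Y) (r : ℝ) :
    volume (closedBall (0 : X) r) = volume (closedBall (0 : Y) r) := by
  let e : X ≃ₗᵢ[ℝ] Y := (stdOrthonormalBasis ℝ X).equiv (stdOrthonormalBasis ℝ Y) (finCongr h)
  rw [← e.measurePreserving.measure_preimage measurableSet_closedBall.nullMeasurableSet,
    e.preimage_closedBall, map_zero]

theorem normDet_le_card_mul_pow_of_image_closedBall_subset (h : finrank ℝ X = finrank ℝ Y)
    (T : X →ₗ[ℝ] Y) {ε : ℝ} (hε : 0 ≤ ε) {t : Finset Y}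
    (ht : T '' closedBall 0 1 ⊆ ⋃ y ∈ t, ball y ε) :
    T.normDet ≤ t.card * ε ^ finrank ℝ X := by
  have hpos : volume (closedBall (0 : Y) 1) ≠ 0 := (measure_closedBall_pos _ _ one_pos).ne'
  have hfin : volume (closedBall (0 : Y) 1) ≠ ⊤ := measure_closedBall_lt_top.ne
  have key : ENNReal.ofReal T.normDet * volume (closedBall (0 : Y) 1) ≤
      ENNReal.ofReal (t.card * ε ^ finrank ℝ X) * volume (closedBall (0 : Y) 1) := by
    rw [← volume_closedBall_eq_of_finrank_eq h, ← volume_image_eq_normDet_mul h,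
      volume_closedBall_eq_of_finrank_eq h, ENNReal.ofReal_mul (by positivity),
      ENNReal.ofReal_natCast, h, mul_assoc]
    exact measure_le_card_mul_of_subset_biUnion_ball volume hε ht
  rw [ENNReal.mul_le_mul_iff_left hpos hfin] at key
  exact (ENNReal.ofReal_le_ofReal_iff (by positivity)).1 key

end InnerProductSpace

/-- For `T : X → Y` between `n`-dimensional real inner product spaces,
`C(ε, T) ≥ |det √(T*T)| (1/ε)ⁿ`; here `|det √(T*T)| = √(det(T*T))` since `T*T` is
a positive operator. -/
theorem coveringNumber_lower_det {X Y : Type*}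
    [NormedAddCommGroup X] [InnerProductSpace ℝ X] [FiniteDimensional ℝ X]
    [NormedAddCommGroup Y] [InnerProductSpace ℝ Y] [FiniteDimensional ℝ Y]
    (n : ℕ) (hX : Module.finrank ℝ X = n) (hY : Module.finrank ℝ Y = n)
    (T : X →L[ℝ] Y) (ε : ℝ) (hε : 0 < ε) :
    ENNReal.ofReal
        (Real.sqrt (LinearMap.det
            (((ContinuousLinearMap.adjoint T).comp T : X →L[ℝ] X) : X →ₗ[ℝ] X))
          * (1 / ε) ^ n)
      ≤ (coveringNumber ε T : ℝ≥0∞) := by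
  subst hX
  borelize X Y
  rw [sqrt_det_adjoint_comp_self]
  refine le_coveringNumber fun t ht => ?_
  have hbound := normDet_le_card_mul_pow_of_image_closedBall_subset hY.symm T hε.le ht
  rw [← ENNReal.ofReal_natCast]
  refine ENNReal.ofReal_le_ofReal ?_
  calc (T : X →ₗ[ℝ] Y).normDet * (1 / ε) ^ finrank ℝ X
      ≤ t.card * ε ^ finrank ℝ X * (1 / ε) ^ finrank ℝ X := by gcongr
    _ = t.card := by rw [mul_assoc, ← mul_pow, mul_one_div_cancel hε.ne', one_pow, mul_one]
end
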